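/- Let X be a geodesic δ-hyperbolic metric space and let Z ⊆ ∂X be a compact subspace of its sequential Gromov boundary, endowed with a visual metric d. Then the hyperbolic cone Co Z over (Z,d) admits a quasi-isometric embedding into X. -/

import Mathlib

open Set Filter Topology Metric

noncomputable section

/-! ## Coarse geometry over explicit distance functions -/

/-- The Gromov product `(x|y)_o` with respect to the distance function `d`. -/
def gromovProd {X : Type*} (d : X → X → ℝ) (o x y : X) : ℝ :=
  (d o x + d o y - d x y) / 2

/-- Gromov's four point condition: a coarse notion of `δ`-hyperbolicity suitable
for graphs (coarsely equivalent to the slim-triangles condition for geodesic spaces). -/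
def FourPointHyperbolic {X : Type*} (d : X → X → ℝ) (δ : ℝ) : Prop :=
  ∀ o x y z : X, min (gromovProd d o x z) (gromovProd d o z y) - δ ≤ gromovProd d o x y

/-- A family of sets is `R`-disjoint if distinct members are at distance `≥ R`. -/
def RDisjointFam {X : Type*} (d : X → X → ℝ) (R : ℝ) (F : Set (Set X)) : Prop :=
  ∀ U ∈ F, ∀ V ∈ F, U ≠ V → ∀ x ∈ U, ∀ y ∈ V, R ≤ d x y

/-- A collection of sets is uniformly bounded. -/
def UnifBounded {X : Type*} (d : X → X → ℝ) (C : Set (Set X)) : Prop :=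
  ∃ B : ℝ, ∀ U ∈ C, ∀ x ∈ U, ∀ y ∈ U, d x y ≤ B

/-- `AsdimLE d n` : the asymptotic dimension of `(X,d)` is at most `n`: for every `R > 0`
there is a uniformly bounded cover splitting into `n+1` `R`-disjoint families. -/
def AsdimLE {X : Type*} (d : X → X → ℝ) (n : ℕ) : Prop :=
  ∀ R : ℝ, 0 < R → ∃ F : Fin (n + 1) → Set (Set X),
    (⋃ i, ⋃₀ F i) = univ ∧ UnifBounded d (⋃ i, F i) ∧ ∀ i, RDisjointFam d R (F i)

/-- The asymptotic dimension of `(X,d)`, as an extended natural number. -/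
noncomputable def asdim {X : Type*} (d : X → X → ℝ) : ℕ∞ :=
  sInf {n : ℕ∞ | ∃ m : ℕ, n = (m : ℕ∞) ∧ AsdimLE d m}

/-- Quasi-isometric embedding with respect to explicit distance functions. -/
def QIEmbWith {A B : Type*} (dA : A → A → ℝ) (dB : B → B → ℝ) (f : A → B) : Prop :=
  ∃ L C : ℝ, 1 ≤ L ∧ 0 ≤ C ∧
    ∀ x y : A, dA x y / L - C ≤ dB (f x) (f y) ∧ dB (f x) (f y) ≤ L * dA x y + C

/-- Coarse surjectivity. -/
def CoarselySurjWith {A B : Type*} (dB : B → B → ℝ) (f : A → B) : Prop :=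
  ∃ C : ℝ, 0 ≤ C ∧ ∀ y : B, ∃ x : A, dB (f x) y ≤ C

/-- The graph metric of a simple graph, as a real valued distance. -/
noncomputable def graphDist {V : Type*} (G : SimpleGraph V) : V → V → ℝ :=
  fun u v => (G.dist u v : ℝ)

/-- `(X,d)` is a quasi-tree: it is quasi-isometric to a simplicial tree. -/
def IsQuasiTree {A : Type*} (dA : A → A → ℝ) : Prop :=
  ∃ (T : Type) (G : SimpleGraph T), G.Connected ∧ G.IsAcyclic ∧
    ∃ f : A → T, QIEmbWith dA (graphDist G) f ∧ CoarselySurjWith (graphDist G) f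

/-- A triple `(x,y,z)` is `K`-aligned: `d x y + d y z ≤ d x z + K`. -/
def Aligned {X : Type*} (d : X → X → ℝ) (K : ℝ) (x y z : X) : Prop :=
  d x y + d y z ≤ d x z + K

/-! ## Geodesics and slim triangles -/

/-- `γ` is a (unit-speed) geodesic segment from `x` to `y`. -/
def IsGeodesicSegment {X : Type*} [MetricSpace X] (γ : ℝ → X) (x y : X) : Prop :=
  γ 0 = x ∧ γ (dist x y) = y ∧
    ∀ s ∈ Icc (0:ℝ) (dist x y), ∀ t ∈ Icc (0:ℝ) (dist x y), dist (γ s) (γ t) = |s - t|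

/-- A geodesic metric space: every two points are joined by a geodesic segment. -/
def GeodesicSpace (X : Type*) [MetricSpace X] : Prop :=
  ∀ x y : X, ∃ γ : ℝ → X, IsGeodesicSegment γ x y

/-- All geodesic triangles in `X` are `δ`-slim. -/
def SlimTriangles (X : Type*) [MetricSpace X] (δ : ℝ) : Prop :=
  ∀ x y z : X, ∀ γ₁ γ₂ γ₃ : ℝ → X,
    IsGeodesicSegment γ₁ x y → IsGeodesicSegment γ₂ y z → IsGeodesicSegment γ₃ x z →
    ∀ p ∈ γ₃ '' Icc (0:ℝ) (dist x z),
      ∃ q ∈ (γ₁ '' Icc (0:ℝ) (dist x y)) ∪ (γ₂ '' Icc (0:ℝ) (dist y z)), dist p q ≤ δ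

/-! ## The sequential Gromov boundary -/

/-- A sequence converging at infinity: pairwise Gromov products diverge. -/
def IsGromovSeq {X : Type*} (d : X → X → ℝ) (u : ℕ → X) : Prop :=
  ∀ o : X, Tendsto (fun p : ℕ × ℕ => gromovProd d o (u p.1) (u p.2)) atTop atTop

/-- Equivalence of sequences converging at infinity: mutual Gromov products diverge. -/
def GromovSeqEquiv {X : Type*} (d : X → X → ℝ) (u v : ℕ → X) : Prop :=
  ∀ o : X, Tendsto (fun p : ℕ × ℕ => gromovProd d o (u p.1) (v p.2)) atTop atTop

/-- The sequential Gromov boundary of `(X,d)`. -/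
def GromovBoundary {X : Type*} (d : X → X → ℝ) : Type _ :=
  Quot fun u v : {u : ℕ → X // IsGromovSeq d u} => GromovSeqEquiv d u.1 v.1

/-- The Gromov product of two boundary points (based at `o`), defined as the supremum
over representative sequences of the liminf of the pairwise Gromov products. -/
noncomputable def bProd {X : Type*} (d : X → X → ℝ) (o : X) (ξ η : GromovBoundary d) : EReal :=
  sSup {l : EReal | ∃ u v : {u : ℕ → X // IsGromovSeq d u},
    Quot.mk _ u = ξ ∧ Quot.mk _ v = η ∧
    l = Filter.liminf (fun p : ℕ × ℕ => ((gromovProd d o (u.1 p.1) (v.1 p.2) : ℝ) : EReal)) atTop}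

/-- The topology of the Gromov boundary: generated by the "shadows"
`{η | (ξ|η)_o > r}`. Convergence `ξᵢ → ξ` corresponds to `(ξᵢ|ξ) → ∞`. -/
instance {X : Type*} {d : X → X → ℝ} : TopologicalSpace (GromovBoundary d) :=
  TopologicalSpace.generateFrom
    {s | ∃ (o : X) (ξ : GromovBoundary d) (r : ℝ), s = {η | (r : EReal) < bProd d o ξ η}}

/-! ## Covering dimension -/

/-- Covering dimension `≤ n`: every finite open cover admits a finite open refinement
of multiplicity at most `n + 1`. -/
def CovDimLE (Z : Type*) [TopologicalSpace Z] (n : ℕ) : Prop :=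
  ∀ U : Finset (Set Z), (∀ u ∈ U, IsOpen u) → ⋃₀ (U : Set (Set Z)) = univ →
    ∃ V : Finset (Set Z), (∀ v ∈ V, IsOpen v) ∧ ⋃₀ (V : Set (Set Z)) = univ ∧
      (∀ v ∈ V, ∃ u ∈ U, v ⊆ u) ∧
      ∀ z : Z, ({v ∈ (V : Set (Set Z)) | z ∈ v}).ncard ≤ n + 1

/-- The topological (covering) dimension, as an extended natural number. -/
noncomputable def covDim (Z : Type*) [TopologicalSpace Z] : ℕ∞ :=
  sInf {n : ℕ∞ | ∃ m : ℕ, n = (m : ℕ∞) ∧ CovDimLE Z m}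

/-! ## The hyperbolic cone -/

/-- Inverse hyperbolic cosine. -/
noncomputable def arcosh (x : ℝ) : ℝ := Real.log (x + Real.sqrt (x ^ 2 - 1))

/-- The underlying set of the hyperbolic cone over `Z` (the points with `t = 0` are
all at distance `0`, realizing the topological cone `Z × [0,∞) / (Z × {0})`). -/
def HypCone (Z : Type*) : Type _ := Z × {t : ℝ // 0 ≤ t}

/-- The hyperbolic cone distance: `|xx'|` is the distance between the tips of a comparison
triangle in `H²` with side lengths `t`, `t'` and angle `(π / D) · ρ z z'` at the cone point,
computed by the hyperbolic law of cosines.  Here `D` is the diameter of `(Z,ρ)`. -/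
noncomputable def hypConeDist {Z : Type*} (ρ : Z → Z → ℝ) (D : ℝ) :
    HypCone Z → HypCone Z → ℝ := fun x y =>
  arcosh (Real.cosh x.2.1 * Real.cosh y.2.1 -
    Real.sinh x.2.1 * Real.sinh y.2.1 * Real.cos (Real.pi / D * ρ x.1 y.1))

/-- `ρ` is a metric on `A`. -/
def IsMetricOn {A : Type*} (ρ : A → A → ℝ) : Prop :=
  (∀ x y, 0 ≤ ρ x y) ∧ (∀ x y, ρ x y = ρ y x) ∧ (∀ x y, ρ x y = 0 ↔ x = y) ∧
    ∀ x y z, ρ x z ≤ ρ x y + ρ y z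

/-- The diameter of `(A,ρ)`. -/
noncomputable def diamOf {A : Type*} (ρ : A → A → ℝ) : ℝ :=
  sSup {r : ℝ | ∃ x y, r = ρ x y}

/-- `a ^ (-t)` for an extended real exponent `t` (the gauge `a^{-(ξ|ξ')}`). -/
noncomputable def negExpGauge (a : ℝ) (t : EReal) : ℝ :=
  if t = ⊤ then 0 else Real.rpow a (-t.toReal)

/-- `ρ` is a visual metric on `Z ⊆ ∂X` with basepoint `o`: it is comparable to
`a^{-(ξ|ξ')_o}`. -/
def IsVisualMetric {X : Type*} (d : X → X → ℝ) (o : X)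
    (Z : Set (GromovBoundary d)) (ρ : Z → Z → ℝ) : Prop :=
  ∃ k₁ k₂ a : ℝ, 0 < k₁ ∧ 0 < k₂ ∧ 1 < a ∧
    ∀ ξ η : Z, k₁ * negExpGauge a (bProd d o ξ.1 η.1) ≤ ρ ξ η ∧
      ρ ξ η ≤ k₂ * negExpGauge a (bProd d o ξ.1 η.1)

/-! ## Surfaces -/

/-- The closed upper half plane, the local model for boundary points. -/
def ClosedHalfPlane : Set (ℝ × ℝ) := {p | 0 ≤ p.2}

/-- `S` is a (topological) surface, possibly with boundary: a second countable Hausdorff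
space locally homeomorphic to `ℝ²` or to the closed half plane. -/
structure IsSurface (S : Type*) [TopologicalSpace S] : Prop where
  t2 : T2Space S
  secondCountable : SecondCountableTopology S
  locEuclidean : ∀ x : S, ∃ U : Set S, x ∈ U ∧ IsOpen U ∧
    (Nonempty (U ≃ₜ (univ : Set (ℝ × ℝ))) ∨ Nonempty (U ≃ₜ ClosedHalfPlane))

/-- The boundary `∂S` of a surface: points with no neighborhood homeomorphic to `ℝ²`. -/
def surfBoundary (S : Type*) [TopologicalSpace S] : Set S :=
  {x | ¬ ∃ U : Set S, x ∈ U ∧ IsOpen U ∧ Nonempty (U ≃ₜ (univ : Set (ℝ × ℝ)))}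

/-- A concrete Möbius band (standard embedding in `ℝ³`). -/
noncomputable def mobiusBand : Set (ℝ × ℝ × ℝ) :=
  (fun q : ℝ × ℝ =>
      ((1 + q.2 / 2 * Real.cos (q.1 / 2)) * Real.cos q.1,
       (1 + q.2 / 2 * Real.cos (q.1 / 2)) * Real.sin q.1,
       q.2 / 2 * Real.sin (q.1 / 2))) '' (Icc 0 (2 * Real.pi) ×ˢ Icc (-1) 1)

/-- A surface is orientable iff it contains no Möbius band. -/
def SurfOrientable (S : Type*) [TopologicalSpace S] : Prop :=
  ¬ ∃ M : Set S, Nonempty (M ≃ₜ mobiusBand)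

/-- A simple closed curve: a subset homeomorphic to the circle. -/
def IsSCC {S : Type*} [TopologicalSpace S] (c : Set S) : Prop :=
  Nonempty (c ≃ₜ Circle)

/-- The genus is at least `n`: there are `n` disjoint simple closed curves, disjoint from
the boundary, with connected complement. -/
def GenusAtLeast (S : Type*) [TopologicalSpace S] (n : ℕ) : Prop :=
  ∃ c : Fin n → Set S, (∀ i, IsSCC (c i)) ∧ (∀ i, Disjoint (c i) (surfBoundary S)) ∧
    (Pairwise fun i j => Disjoint (c i) (c j)) ∧ IsConnected (⋃ i, c i)ᶜ

/-- The genus of a surface. -/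
noncomputable def surfGenus (S : Type*) [TopologicalSpace S] : ℕ∞ :=
  sSup {n : ℕ∞ | ∃ m : ℕ, n = (m : ℕ∞) ∧ GenusAtLeast S m}

/-- The number of boundary components of `S`. -/
noncomputable def numBComps (S : Type*) [TopologicalSpace S] : ℕ :=
  Nat.card (ConnectedComponents ↥(surfBoundary S))

/-- The Euler characteristic of a compact orientable surface, via the classification
of surfaces: `χ = 2 - 2g - b`. -/
noncomputable def eulerChar (S : Type*) [TopologicalSpace S] : ℤ :=
  2 - 2 * ((surfGenus S).toNat : ℤ) - (numBComps S : ℤ)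

/-! ## Arcs and prescribed arc graphs -/

/-- The boundary components of the boundary set `B ⊆ S`. -/
def BCompOf {S : Type*} [TopologicalSpace S] (B : Set S) : Type _ :=
  ConnectedComponents ↥B

/-- A simple, properly embedded arc in `S` with endpoints on `B` (parametrized on `[0,1]`). -/
structure SArcIn (S : Type*) [TopologicalSpace S] (B : Set S) where
  f : ℝ → S
  cont : ContinuousOn f (Icc 0 1)
  inj : InjOn f (Icc 0 1)
  end0 : f 0 ∈ B
  end1 : f 1 ∈ B
  interiorPt : ∀ t ∈ Ioo (0:ℝ) 1, f t ∉ B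

variable {S : Type*} [TopologicalSpace S] {B : Set S}

/-- The boundary component containing the initial endpoint. -/
def SArcIn.startC (a : SArcIn S B) : BCompOf B :=
  ConnectedComponents.mk (⟨a.f 0, a.end0⟩ : ↥B)

/-- The boundary component containing the terminal endpoint. -/
def SArcIn.endC (a : SArcIn S B) : BCompOf B :=
  ConnectedComponents.mk (⟨a.f 1, a.end1⟩ : ↥B)

/-- An arc is inessential if it can be homotoped into the boundary, through maps of pairs
`([0,1], {0,1}) → (S, B)`. -/
def SArcIn.Inessential (a : SArcIn S B) : Prop :=
  ∃ H : ℝ × ℝ → S, ContinuousOn H (Icc 0 1 ×ˢ Icc 0 1) ∧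
    (∀ t ∈ Icc (0:ℝ) 1, H (0, t) = a.f t) ∧
    (∀ t ∈ Icc (0:ℝ) 1, H (1, t) ∈ B) ∧
    ∀ s ∈ Icc (0:ℝ) 1, H (s, 0) ∈ B ∧ H (s, 1) ∈ B

/-- Isotopy of arcs: a homotopy through simple, properly embedded arcs. -/
def SArcIn.Isotopic (a b : SArcIn S B) : Prop :=
  ∃ H : ℝ × ℝ → S, ContinuousOn H (Icc 0 1 ×ˢ Icc 0 1) ∧
    (∀ t ∈ Icc (0:ℝ) 1, H (0, t) = a.f t ∧ H (1, t) = b.f t) ∧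
    ∀ s ∈ Icc (0:ℝ) 1, InjOn (fun t => H (s, t)) (Icc 0 1) ∧
      H (s, 0) ∈ B ∧ H (s, 1) ∈ B ∧ ∀ t ∈ Ioo (0:ℝ) 1, H (s, t) ∉ B

/-- An arc is `Γ`-allowed if it is essential and joins boundary components related by `Γ`. -/
def SArcIn.Allowed (Γ : BCompOf B → BCompOf B → Prop) (a : SArcIn S B) : Prop :=
  ¬ a.Inessential ∧ Γ a.startC a.endC

/-- Vertices of the `Γ`-prescribed arc graph: isotopy classes of `Γ`-allowed arcs. -/
def ArcVert (S : Type*) [TopologicalSpace S] (B : Set S)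
    (Γ : BCompOf B → BCompOf B → Prop) : Type _ :=
  Quot fun a b : {a : SArcIn S B // a.Allowed Γ} => a.1.Isotopic b.1

/-- The image of an arc. -/
def arcImage (a : SArcIn S B) : Set S := a.f '' Icc 0 1

/-- The `Γ`-prescribed arc graph `A(S,Γ)`: edges are (realized) disjointness. -/
def arcGraph (S : Type*) [TopologicalSpace S] (B : Set S)
    (Γ : BCompOf B → BCompOf B → Prop) : SimpleGraph (ArcVert S B Γ) where
  Adj α β := α ≠ β ∧ ∃ a b : {a : SArcIn S B // a.Allowed Γ},
    Quot.mk _ a = α ∧ Quot.mk _ b = β ∧ Disjoint (arcImage a.1) (arcImage b.1)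
  symm := ⟨by
    rintro α β ⟨hne, a, b, ha, hb, hd⟩
    exact ⟨hne.symm, b, a, hb, ha, hd.symm⟩⟩
  loopless := ⟨fun α h => h.1 rfl⟩

/-- The simplicial metric on the prescribed arc graph. -/
noncomputable def arcDist (S : Type*) [TopologicalSpace S] (B : Set S)
    (Γ : BCompOf B → BCompOf B → Prop) : ArcVert S B Γ → ArcVert S B Γ → ℝ :=
  graphDist (arcGraph S B Γ)

/-- Non-triviality of `A(S,Γ)`: `χ(S) ≤ -1`, `S` is not a pair of pants, and `Γ ≠ ∅`. -/
def ArcNonTrivial (S : Type*) [TopologicalSpace S]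
    (Γ : BCompOf (surfBoundary S) → BCompOf (surfBoundary S) → Prop) : Prop :=
  eulerChar S ≤ -1 ∧ ¬(surfGenus S = 0 ∧ numBComps S = 3) ∧ ∃ i j, Γ i j

/-- A relation is bipartite if it is bipartite as a graph. -/
def RelBipartite {I : Type*} (Γ : I → I → Prop) : Prop :=
  ∃ f : I → Bool, ∀ i j, Γ i j → f i ≠ f j

/-- The simplicial inclusion `ι : A(S,Γ) → A(S,Γ')` induced by `Γ ⊆ Γ'`. -/
def iotaArc {S : Type*} [TopologicalSpace S] {B : Set S}
    {Γ Γ' : BCompOf B → BCompOf B → Prop} (h : ∀ i j, Γ i j → Γ' i j) :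
    ArcVert S B Γ → ArcVert S B Γ' :=
  Quot.lift (fun a => Quot.mk _ ⟨a.1, a.2.1, h _ _ a.2.2⟩) fun _ _ hab => Quot.sound hab

/-! ## Ends of a surface, the Mann–Rafi preorder, and grand arcs -/

/-- Compact exhaustion data: compact subsets of `Ω`. -/
def CompactSets (Ω : Type*) [TopologicalSpace Ω] := {K : Set Ω // IsCompact K}

/-- An end of `Ω`: a compatible choice, for every compact `K ⊆ Ω`, of a connected
component of the complement `Ωᶜ \ K`. -/
structure SurfEnd (Ω : Type*) [TopologicalSpace Ω] where
  comp : CompactSets Ω → Set Ω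
  isCompIn : ∀ K : CompactSets Ω, ∃ x ∈ (K.1)ᶜ, comp K = connectedComponentIn (K.1)ᶜ x
  compat : ∀ K K' : CompactSets Ω, K.1 ⊆ K'.1 → comp K' ⊆ comp K

/-- `U` is a neighborhood of the end `e`. -/
def SurfEnd.InNbhd {Ω : Type*} [TopologicalSpace Ω] (e : SurfEnd Ω) (U : Set Ω) : Prop :=
  IsOpen U ∧ ∃ K : CompactSets Ω, e.comp K ⊆ U

/-- The Mann–Rafi preorder on ends: `e ≼ f` iff every neighborhood of `f` contains a
homeomorphically embedded copy of some neighborhood of `e`. -/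
def MRle {Ω : Type*} [TopologicalSpace Ω] (e f : SurfEnd Ω) : Prop :=
  ∀ U : Set Ω, f.InNbhd U → ∃ V : Set Ω, e.InNbhd V ∧
    ∃ φ : ↥V → ↥U, Topology.IsEmbedding φ ∧ IsOpen (Subtype.val '' (range φ))

/-- Equivalence of ends under the Mann–Rafi preorder. -/
def MREquiv {Ω : Type*} [TopologicalSpace Ω] (e f : SurfEnd Ω) : Prop :=
  MRle e f ∧ MRle f e

/-- An end is maximal if it dominates everything that dominates it. -/
def IsMaximalEnd {Ω : Type*} [TopologicalSpace Ω] (e : SurfEnd Ω) : Prop :=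
  ∀ f : SurfEnd Ω, MRle e f → MRle f e

/-- `M(Ω)`: the set of equivalence classes of maximal ends. -/
def MaxClasses (Ω : Type*) [TopologicalSpace Ω] : Type _ :=
  Quot fun e f : {e : SurfEnd Ω // IsMaximalEnd e} => MREquiv e.1 f.1

/-- `Ω` has infinite topological type: its fundamental group is not finitely generated. -/
def InfiniteType (Ω : Type*) [TopologicalSpace Ω] : Prop :=
  ∀ x : Ω, ¬ Group.FG (FundamentalGroup Ω x)

/-- `Ω` is an orientable, boundaryless, connected surface of infinite topological type. -/
def IsInfTypeSurface (Ω : Type*) [TopologicalSpace Ω] : Prop :=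
  IsSurface Ω ∧ surfBoundary Ω = ∅ ∧ ConnectedSpace Ω ∧ SurfOrientable Ω ∧ InfiniteType Ω

/-- A grand arc: a bi-infinite simple arc whose two ends converge to maximal ends of `Ω`
of distinct equivalence classes. -/
structure GrandArc (Ω : Type*) [TopologicalSpace Ω] where
  f : ℝ → Ω
  cont : Continuous f
  inj : Function.Injective f
  endPos : SurfEnd Ω
  endNeg : SurfEnd Ω
  tendPos : ∀ K : CompactSets Ω, ∀ᶠ t in atTop, f t ∈ endPos.comp K
  tendNeg : ∀ K : CompactSets Ω, ∀ᶠ t in atBot, f t ∈ endNeg.comp K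
  maxPos : IsMaximalEnd endPos
  maxNeg : IsMaximalEnd endNeg
  distinct : ¬ MREquiv endPos endNeg

/-- Isotopy of grand arcs: a homotopy through grand arcs. -/
def GrandArc.Isotopic {Ω : Type*} [TopologicalSpace Ω] (a b : GrandArc Ω) : Prop :=
  ∃ H : ℝ × ℝ → Ω, ContinuousOn H (Icc 0 1 ×ˢ univ) ∧
    (∀ t : ℝ, H (0, t) = a.f t ∧ H (1, t) = b.f t) ∧
    ∀ s ∈ Icc (0:ℝ) 1, ∃ g : GrandArc Ω, g.f = fun t => H (s, t)

/-- Vertices of the grand arc graph: isotopy classes of grand arcs. -/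
def GAVert (Ω : Type*) [TopologicalSpace Ω] : Type _ :=
  Quot fun a b : GrandArc Ω => a.Isotopic b

/-- The grand arc graph `G(Ω)`: edges are given by (realized) disjointness. -/
def grandArcGraph (Ω : Type*) [TopologicalSpace Ω] : SimpleGraph (GAVert Ω) where
  Adj α β := α ≠ β ∧ ∃ a b : GrandArc Ω,
    Quot.mk _ a = α ∧ Quot.mk _ b = β ∧ Disjoint (range a.f) (range b.f)
  symm := ⟨by
    rintro α β ⟨hne, a, b, ha, hb, hd⟩
    exact ⟨hne.symm, b, a, hb, ha, hd.symm⟩⟩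
  loopless := ⟨fun α h => h.1 rfl⟩

/-- The simplicial metric on the grand arc graph. -/
noncomputable def gaDist (Ω : Type*) [TopologicalSpace Ω] : GAVert Ω → GAVert Ω → ℝ :=
  graphDist (grandArcGraph Ω)

/-! ## Subsurfaces -/

/-- A compact, connected subsurface of `Ω`. -/
def IsCompactSubsurface {Ω : Type*} [TopologicalSpace Ω] (W : Set Ω) : Prop :=
  IsCompact W ∧ IsConnected W ∧ IsSurface ↥W

/-- `W ⊆ Ω` is `π₁`-injective: every loop in `W` which is null-homotopic in `Ω`
is already null-homotopic in `W`. -/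
def Pi1Injective {Ω : Type*} [TopologicalSpace Ω] (W : Set Ω) : Prop :=
  ∀ x : ↥W, ∀ γ : Path x x,
    (γ.map continuous_subtype_val).Homotopic (Path.refl (x : Ω)) → γ.Homotopic (Path.refl x)

/-- `W` is a pair of pants (three-holed sphere). -/
def IsPants {Ω : Type*} [TopologicalSpace Ω] (W : Set Ω) : Prop :=
  surfGenus ↥W = 0 ∧ numBComps ↥W = 3

/-- `W` is an annulus. -/
def IsAnnulusSet {Ω : Type*} [TopologicalSpace Ω] (W : Set Ω) : Prop :=
  Nonempty (↥W ≃ₜ (Circle × (Icc (0:ℝ) 1)))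

/-- A witness for the grand arc graph: an essential, connected, compact non-pants
subsurface intersecting every grand arc. -/
def IsGAWitness {Ω : Type*} [TopologicalSpace Ω] (W : Set Ω) : Prop :=
  IsCompactSubsurface W ∧ Pi1Injective W ∧ ¬ IsPants W ∧
    ∀ a : GrandArc Ω, (range a.f ∩ W).Nonempty

/-- The boundary of the subsurface `W`, as a subset of `↥W` (its frontier in `Ω`). -/
def subBdry {Ω : Type*} [TopologicalSpace Ω] (W : Set Ω) : Set ↥W :=
  Subtype.val ⁻¹' (frontier W)

/-- `W` is fully separating: every complementary component is adjacent to exactly one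
boundary component of `W`. -/
def FullySeparating {Ω : Type*} [TopologicalSpace Ω] (W : Set Ω) : Prop :=
  ∀ x ∈ Wᶜ, ∃! b : ConnectedComponents ↥(subBdry W),
    ∃ y : ↥(subBdry W), ConnectedComponents.mk y = b ∧
      (y.1 : Ω) ∈ closure (connectedComponentIn Wᶜ x)

/-- The end `ε` lies behind the boundary component `j` of `W`: some complementary
component of `W` adjacent to `j` contains a neighborhood of `ε`. -/
def EndBehind {Ω : Type*} [TopologicalSpace Ω] (W : Set Ω)
    (j : ConnectedComponents ↥(subBdry W)) (ε : SurfEnd Ω) : Prop :=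
  ∃ x ∈ Wᶜ,
    (∃ y : ↥(subBdry W), ConnectedComponents.mk y = j ∧
      (y.1 : Ω) ∈ closure (connectedComponentIn Wᶜ x)) ∧
    ∃ K : CompactSets Ω, ε.comp K ⊆ connectedComponentIn Wᶜ x

/-! ## Miscellaneous definitions used in the statements -/

/-- A discrete geodesic in a graph from `a` to `b`. -/
def DiscreteGeodesic {V : Type*} (G : SimpleGraph V) (γ : ℕ → V) (a b : V) : Prop :=
  γ 0 = a ∧ γ (G.dist a b) = b ∧
    ∀ m n : ℕ, m ≤ G.dist a b → n ≤ G.dist a b → G.dist (γ m) (γ n) = max m n - min m n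

/-- The `n`-dimensional Nöbeling space: the set of points of `ℝ^{2n+1}` having at most `n`
rational coordinates. -/
def nobelingSpace (n : ℕ) : Set (Fin (2 * n + 1) → ℝ) :=
  {x | ({i | ∃ q : ℚ, x i = (q : ℝ)}).ncard ≤ n}

/-- The complete relation on boundary components; `A(S, completeRel) = A(S)` is the full
arc graph. -/
def completeRel {S : Type*} [TopologicalSpace S] (B : Set S) :
    BCompOf B → BCompOf B → Prop := fun _ _ => True

/-- `Γ` is a pointed star based at `i₀`: it joins `i₀` to every other component and
nothing else. -/
def IsStarRel {I : Type*} (Γ : I → I → Prop) (i₀ : I) : Prop :=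
  ∀ j k, Γ j k ↔ (j = i₀ ∧ k ≠ i₀) ∨ (k = i₀ ∧ j ≠ i₀)


set_option maxHeartbeats 1600000

namespace HCQI

lemma eventually_pair {p : ℕ × ℕ → Prop} :
    (∀ᶠ q in (atTop : Filter (ℕ × ℕ)), p q) ↔ ∃ N : ℕ, ∀ m n : ℕ, N ≤ m → N ≤ n → p (m, n) := by
  rw [Filter.eventually_atTop]
  constructor
  · rintro ⟨⟨a, b⟩, h⟩
    refine ⟨max a b, fun m n hm hn => h (m, n) ?_⟩
    exact ⟨le_trans (le_max_left _ _) hm, le_trans (le_max_right _ _) hn⟩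
  · rintro ⟨N, h⟩
    exact ⟨(N, N), fun q hq => by have := h q.1 q.2 hq.1 hq.2; simpa using this⟩

lemma ereal_top_of_forall {b : EReal} (h : ∀ c : ℝ, (c : EReal) ≤ b) : b = ⊤ := by
  by_contra hb
  obtain ⟨y, hy1, _⟩ := EReal.exists_between_coe_real (lt_top_iff_ne_top.2 hb)
  exact absurd (h y) (not_le.2 hy1)

lemma ereal_le_of_forall_lt {x y : EReal} (h : ∀ c : ℝ, (c : EReal) < x → (c : EReal) ≤ y) :
    x ≤ y := by
  rcases eq_or_ne x ⊤ with rfl | hx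
  · have hy : y = ⊤ := ereal_top_of_forall (fun c => h c (EReal.coe_lt_top c))
    simp [hy]
  · by_contra hxy
    push_neg at hxy
    obtain ⟨c, hc1, hc2⟩ := EReal.exists_between_coe_real hxy
    exact absurd (h c hc2) (not_le.2 hc1)

lemma abs_eq_sum_sub_two_min (t1 t2 : ℝ) : |t1 - t2| = t1 + t2 - 2 * min t1 t2 := by
  rcases le_total t1 t2 with h | h
  · rw [min_eq_left h, abs_of_nonpos (by linarith)]
    ring
  · rw [min_eq_right h, abs_of_nonneg (by linarith)]
    ring

end HCQI

namespace HCQI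

lemma real_le_of_forall_eps {a b : ℝ} (h : ∀ ε : ℝ, 0 < ε → a ≤ b + ε) : a ≤ b := by
  by_contra h'
  push_neg at h'
  have := h ((a - b)/2) (by linarith)
  linarith

variable {X : Type*} [MetricSpace X]

lemma gp_nonneg (o x y : X) : 0 ≤ gromovProd dist o x y := by
  have := dist_triangle x o y
  simp only [gromovProd]
  rw [dist_comm x o] at this
  linarith

lemma gp_symm (o x y : X) : gromovProd dist o x y = gromovProd dist o y x := by
  simp only [gromovProd]
  rw [dist_comm x y]
  ring

lemma gp_le_left (o x y : X) : gromovProd dist o x y ≤ dist o x := by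
  have := dist_triangle o x y
  simp only [gromovProd]
  linarith

lemma gp_self (o x : X) : gromovProd dist o x x = dist o x := by
  simp [gromovProd]

lemma geo_dist_left {γ : ℝ → X} {x y : X} (hγ : IsGeodesicSegment γ x y)
    {s : ℝ} (hs : s ∈ Icc 0 (dist x y)) : dist x (γ s) = s := by
  have h := hγ.2.2 0 ⟨le_refl 0, dist_nonneg⟩ s hs
  rw [hγ.1] at h
  rw [h, abs_of_nonpos (by linarith [hs.1])]
  ring

lemma geo_dist_right {γ : ℝ → X} {x y : X} (hγ : IsGeodesicSegment γ x y)
    {s : ℝ} (hs : s ∈ Icc 0 (dist x y)) : dist (γ s) y = dist x y - s := by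
  have h := hγ.2.2 s hs (dist x y) ⟨dist_nonneg, le_refl _⟩
  rw [hγ.2.1] at h
  rw [h, abs_of_nonpos (by linarith [hs.2])]
  ring

lemma geo_continuousOn {γ : ℝ → X} {x y : X} (hγ : IsGeodesicSegment γ x y) :
    ContinuousOn γ (Icc 0 (dist x y)) := by
  have : LipschitzOnWith 1 γ (Icc 0 (dist x y)) := by
    apply LipschitzOnWith.of_dist_le_mul
    intro s hs t ht
    rw [hγ.2.2 s hs t ht, Real.dist_eq]
    simp
  exact this.continuousOn

/-- points on a geodesic from x to y are at distance ≥ (x|y)_o from o -/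
lemma gp_le_geo_pt {γ : ℝ → X} {x y : X} (hγ : IsGeodesicSegment γ x y)
    {s : ℝ} (hs : s ∈ Icc 0 (dist x y)) (o : X) :
    gromovProd dist o x y ≤ dist o (γ s) := by
  have h1 := geo_dist_left hγ hs
  have h2 := geo_dist_right hγ hs
  have t1 := dist_triangle o (γ s) x
  have t2 := dist_triangle o (γ s) y
  rw [dist_comm (γ s) x, h1] at t1
  rw [h2] at t2
  simp only [gromovProd]
  linarith

/-- the Gromov product of the endpoint with a point on the geodesic equals the parameter -/
lemma gp_geo_pt {γ : ℝ → X} {o P : X} (hγ : IsGeodesicSegment γ o P)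
    {s : ℝ} (hs : s ∈ Icc 0 (dist o P)) :
    gromovProd dist o P (γ s) = s := by
  have h1 := geo_dist_left hγ hs
  have h2 := geo_dist_right hγ hs
  simp only [gromovProd]
  rw [dist_comm P (γ s), h2, h1]
  ring

variable {δ : ℝ}

/-- four point condition from slim triangles -/
lemma gp_four (hδ : 0 ≤ δ) (hgeo : GeodesicSpace X) (hhyp : SlimTriangles X δ)
    (o a b c : X) :
    min (gromovProd dist o a b) (gromovProd dist o b c) - 3*δ ≤ gromovProd dist o a c := by
  obtain ⟨η, hη⟩ := hgeo a c
  obtain ⟨α, hα⟩ := hgeo a o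
  obtain ⟨β, hβ⟩ := hgeo o c
  set D := dist a c with hD
  have hD0 : 0 ≤ D := dist_nonneg
  set KA := α '' Icc 0 (dist a o) with hKA
  set KB := β '' Icc 0 (dist o c) with hKB
  have hKAc : IsCompact KA := isCompact_Icc.image_of_continuousOn (geo_continuousOn hα)
  have hKBc : IsCompact KB := isCompact_Icc.image_of_continuousOn (geo_continuousOn hβ)
  have hKAne : KA.Nonempty := ⟨a, ⟨0, ⟨le_refl _, dist_nonneg⟩, hα.1⟩⟩
  have hKBne : KB.Nonempty := ⟨c, ⟨dist o c, ⟨dist_nonneg, le_refl _⟩, hβ.2.1⟩⟩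
  set F := fun s => Metric.infDist (η s) KA - Metric.infDist (η s) KB with hF
  have hFc : ContinuousOn F (Icc 0 D) := by
    apply ContinuousOn.sub
    · exact (Metric.continuous_infDist_pt KA).comp_continuousOn (geo_continuousOn hη)
    · exact (Metric.continuous_infDist_pt KB).comp_continuousOn (geo_continuousOn hη)
  have hF0 : F 0 ≤ 0 := by
    have h0 : Metric.infDist (η 0) KA = 0 := by
      rw [hη.1]
      exact Metric.infDist_zero_of_mem ⟨0, ⟨le_refl _, dist_nonneg⟩, hα.1⟩
    simp only [hF, h0, zero_sub, neg_nonpos]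
    exact Metric.infDist_nonneg
  have hFD : 0 ≤ F D := by
    have h0 : Metric.infDist (η D) KB = 0 := by
      rw [hη.2.1]
      exact Metric.infDist_zero_of_mem ⟨dist o c, ⟨dist_nonneg, le_refl _⟩, hβ.2.1⟩
    simp only [hF, h0, sub_zero]
    exact Metric.infDist_nonneg
  obtain ⟨s₀, hs₀, hFs₀⟩ := intermediate_value_Icc hD0 hFc ⟨hF0, hFD⟩
  set w := η s₀ with hw
  -- slim triangle (a, o, c): w is δ-close to KA ∪ KB
  obtain ⟨q, hq, hqd⟩ := hhyp a o c α β η hα hβ hη w ⟨s₀, hs₀, rfl⟩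
  have hboth : Metric.infDist w KA ≤ δ ∧ Metric.infDist w KB ≤ δ := by
    have heq : Metric.infDist w KA = Metric.infDist w KB := by
      have : F s₀ = 0 := hFs₀
      simp only [hF] at this
      linarith
    rcases hq with hq | hq
    · have h1 := Metric.infDist_le_dist_of_mem (x := w) hq
      exact ⟨le_trans h1 hqd, by rw [← heq]; exact le_trans h1 hqd⟩
    · have h1 := Metric.infDist_le_dist_of_mem (x := w) hq
      exact ⟨by rw [heq]; exact le_trans h1 hqd, le_trans h1 hqd⟩
  obtain ⟨pa, hpaK, hpadist⟩ := hKAc.exists_infDist_eq_dist hKAne w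
  obtain ⟨pb, hpbK, hpbdist⟩ := hKBc.exists_infDist_eq_dist hKBne w
  have hpa : dist w pa ≤ δ := by rw [← hpadist]; exact hboth.1
  have hpb : dist w pb ≤ δ := by rw [← hpbdist]; exact hboth.2
  obtain ⟨ra, hra, rfl⟩ := hpaK
  obtain ⟨rb, hrb, rfl⟩ := hpbK
  -- distances from o
  have haw : dist a w = s₀ := geo_dist_left hη hs₀
  have hwc : dist w c = D - s₀ := geo_dist_right hη hs₀
  have hαl : dist a (α ra) = ra := geo_dist_left hα hra
  have hαr : dist (α ra) o = dist a o - ra := geo_dist_right hα hra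
  have hβl : dist o (β rb) = rb := geo_dist_left hβ hrb
  have hβr : dist (β rb) c = dist o c - rb := geo_dist_right hβ hrb
  have h1 : dist o w + dist w a ≤ dist o a + 2*δ := by
    have t1 := dist_triangle o (α ra) w
    have t2 := dist_triangle w (α ra) a
    rw [dist_comm o (α ra), hαr] at t1
    rw [dist_comm (α ra) a, hαl] at t2
    have hda : dist o a = dist a o := dist_comm o a
    have hwa : dist (α ra) w = dist w (α ra) := dist_comm _ _
    linarith
  have h2 : dist o w + dist w c ≤ dist o c + 2*δ := by
    have t1 := dist_triangle o (β rb) w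
    have t2 := dist_triangle w (β rb) c
    rw [hβl] at t1
    rw [hβr] at t2
    have hwb : dist (β rb) w = dist w (β rb) := dist_comm _ _
    linarith
  have hwa' : dist w a = s₀ := by rw [dist_comm]; exact haw
  have hclaim1 : dist o w - 2*δ ≤ gromovProd dist o a c := by
    simp only [gromovProd, ← hD]
    linarith
  -- slim triangle (a, b, c)
  obtain ⟨α2, hα2⟩ := hgeo a b
  obtain ⟨β2, hβ2⟩ := hgeo b c
  obtain ⟨q2, hq2, hq2d⟩ := hhyp a b c α2 β2 η hα2 hβ2 hη w ⟨s₀, hs₀, rfl⟩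
  have hclaim2 : min (gromovProd dist o a b) (gromovProd dist o b c) ≤ dist o w + δ := by
    rcases hq2 with hq2 | hq2
    · obtain ⟨r, hr, rfl⟩ := hq2
      have := gp_le_geo_pt hα2 hr o
      have t := dist_triangle o w (α2 r)
      calc min (gromovProd dist o a b) (gromovProd dist o b c) ≤ gromovProd dist o a b :=
            min_le_left _ _
        _ ≤ dist o (α2 r) := this
        _ ≤ dist o w + δ := by linarith
    · obtain ⟨r, hr, rfl⟩ := hq2
      have := gp_le_geo_pt hβ2 hr o
      have t := dist_triangle o w (β2 r)
      calc min (gromovProd dist o a b) (gromovProd dist o b c) ≤ gromovProd dist o b c :=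
            min_le_right _ _
        _ ≤ dist o (β2 r) := this
        _ ≤ dist o w + δ := by linarith
  linarith


/-- fellow traveling of geodesics from a common point, up to the Gromov product -/
lemma fellow (hδ : 0 ≤ δ) (hgeo : GeodesicSpace X) (hhyp : SlimTriangles X δ)
    {o P Q : X} {γ γ' : ℝ → X} (hγ : IsGeodesicSegment γ o P) (hγ' : IsGeodesicSegment γ' o Q)
    {s : ℝ} (hs0 : 0 ≤ s) (hsm : s ≤ gromovProd dist o P Q) :
    dist (γ s) (γ' s) ≤ 4*δ := by
  set m := gromovProd dist o P Q with hm
  have hmP : m ≤ dist o P := gp_le_left o P Q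
  have hmQ : m ≤ dist o Q := by rw [hm, gp_symm]; exact gp_le_left o Q P
  obtain ⟨η, hη⟩ := hgeo Q P
  have hA : ∀ r : ℝ, 0 ≤ r → r + δ < m → dist (γ r) (γ' r) ≤ 2*δ := by
    intro r hr0 hrlt
    have hrP : r ∈ Icc 0 (dist o P) := ⟨hr0, by linarith⟩
    have hrQ : r ∈ Icc 0 (dist o Q) := ⟨hr0, by linarith⟩
    obtain ⟨q, hq, hqd⟩ := hhyp o Q P γ' η γ hγ' hη hγ (γ r) ⟨r, hrP, rfl⟩
    have hdor : dist o (γ r) = r := geo_dist_left hγ hrP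
    rcases hq with hq | hq
    · obtain ⟨r', hr', rfl⟩ := hq
      have hd1 : dist o (γ' r') = r' := geo_dist_left hγ' hr'
      have habs : |r' - r| ≤ δ := by
        have h := abs_dist_sub_le (γ' r') (γ r) o
        rw [dist_comm (γ' r') o, dist_comm (γ r) o, hd1, hdor, dist_comm (γ' r') (γ r)] at h
        exact le_trans h hqd
      have hd2 : dist (γ' r') (γ' r) = |r' - r| := hγ'.2.2 r' hr' r hrQ
      calc dist (γ r) (γ' r) ≤ dist (γ r) (γ' r') + dist (γ' r') (γ' r) := dist_triangle _ _ _
        _ ≤ δ + δ := by rw [hd2]; exact add_le_add hqd habs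
        _ = 2*δ := by ring
    · exfalso
      obtain ⟨r', hr', rfl⟩ := hq
      have h1 : gromovProd dist o Q P ≤ dist o (η r') := gp_le_geo_pt hη hr' o
      have h2 : dist o (η r') ≤ dist o (γ r) + dist (γ r) (η r') := dist_triangle _ _ _
      rw [gp_symm, ← hm] at h1
      rw [hdor] at h2
      linarith
  apply real_le_of_forall_eps
  intro ε hε
  rcases lt_or_ge (s + δ) m with hcase | hcase
  · linarith [hA s hs0 hcase]
  · have hm0 : 0 ≤ m := gp_nonneg o P Q
    set s₀ := max 0 (m - δ - ε/2) with hs₀def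
    have hs₀0 : 0 ≤ s₀ := le_max_left _ _
    have hs₀s : s₀ ≤ s := max_le hs0 (by linarith)
    have hstep : dist (γ s₀) (γ' s₀) ≤ 2*δ := by
      rcases le_or_gt (m - δ - ε/2) 0 with h0 | h0
      · have hz : s₀ = 0 := max_eq_left h0
        rw [hz, hγ.1, hγ'.1]
        simp
        linarith
      · have hz : s₀ = m - δ - ε/2 := max_eq_right (le_of_lt h0)
        exact hA s₀ hs₀0 (by rw [hz]; linarith)
    have hsiP : s ∈ Icc 0 (dist o P) := ⟨hs0, by linarith⟩
    have hsiQ : s ∈ Icc 0 (dist o Q) := ⟨hs0, by linarith⟩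
    have hs₀P : s₀ ∈ Icc 0 (dist o P) := ⟨hs₀0, by linarith⟩
    have hs₀Q : s₀ ∈ Icc 0 (dist o Q) := ⟨hs₀0, by linarith⟩
    have h1 : dist (γ s) (γ s₀) = s - s₀ := by
      rw [hγ.2.2 s hsiP s₀ hs₀P, abs_of_nonneg (by linarith)]
    have h2 : dist (γ' s₀) (γ' s) = s - s₀ := by
      rw [hγ'.2.2 s₀ hs₀Q s hsiQ, abs_of_nonpos (by linarith)]
      ring
    have hgap : s - s₀ ≤ δ + ε/2 := by
      have := le_max_right 0 (m - δ - ε/2)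
      linarith
    calc dist (γ s) (γ' s) ≤ dist (γ s) (γ s₀) + dist (γ s₀) (γ' s₀) + dist (γ' s₀) (γ' s) :=
          dist_triangle4 _ _ _ _
      _ ≤ (δ + ε/2) + 2*δ + (δ + ε/2) := by rw [h1, h2]; linarith
      _ = 4*δ + ε := by ring

/-- main distance estimate along geodesics -/
lemma dist_est (hδ : 0 ≤ δ) (hgeo : GeodesicSpace X) (hhyp : SlimTriangles X δ)
    {o P Q : X} {γ γ' : ℝ → X} (hγ : IsGeodesicSegment γ o P) (hγ' : IsGeodesicSegment γ' o Q)
    {s s' : ℝ} (hs : s ∈ Icc 0 (dist o P)) (hs' : s' ∈ Icc 0 (dist o Q)) :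
    |dist (γ s) (γ' s') - (s + s' - 2 * min (min s s') (gromovProd dist o P Q))| ≤ 12*δ := by
  set m := gromovProd dist o P Q with hm
  have hm0 : 0 ≤ m := gp_nonneg o P Q
  have hmP : m ≤ dist o P := gp_le_left o P Q
  have hmQ : m ≤ dist o Q := by rw [hm, gp_symm]; exact gp_le_left o Q P
  have hds : dist o (γ s) = s := geo_dist_left hγ hs
  have hds' : dist o (γ' s') = s' := geo_dist_left hγ' hs'
  -- upper bound
  have hup : dist (γ s) (γ' s') ≤ s + s' - 2 * min (min s s') m + 4*δ := by
    rcases le_total m (min s s') with hmm | hmm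
    · rw [min_eq_right hmm]
      have hmiP : m ∈ Icc 0 (dist o P) := ⟨hm0, hmP⟩
      have hmiQ : m ∈ Icc 0 (dist o Q) := ⟨hm0, hmQ⟩
      have h1 : dist (γ s) (γ m) = s - m := by
        rw [hγ.2.2 s hs m hmiP, abs_of_nonneg (by
          have := le_trans hmm (min_le_left s s'); linarith)]
      have h2 : dist (γ' m) (γ' s') = s' - m := by
        rw [hγ'.2.2 m hmiQ s' hs', abs_of_nonpos (by
          have := le_trans hmm (min_le_right s s'); linarith)]
        ring
      have h3 : dist (γ m) (γ' m) ≤ 4*δ := fellow hδ hgeo hhyp hγ hγ' hm0 (le_refl m)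
      calc dist (γ s) (γ' s') ≤ dist (γ s) (γ m) + dist (γ m) (γ' m) + dist (γ' m) (γ' s') :=
            dist_triangle4 _ _ _ _
        _ ≤ (s - m) + 4*δ + (s' - m) := by rw [h1, h2]; linarith
        _ = s + s' - 2*m + 4*δ := by ring
    · rw [min_eq_left hmm]
      rcases le_total s s' with hss | hss
      · rw [min_eq_left hss]
        have hsm : s ≤ m := le_trans (le_min hss (le_refl s)) (by rw [min_comm] at hmm; exact hmm)
        have hsQ : s ∈ Icc 0 (dist o Q) := ⟨hs.1, by linarith⟩
        have h1 : dist (γ s) (γ' s) ≤ 4*δ := fellow hδ hgeo hhyp hγ hγ' hs.1 hsm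
        have h2 : dist (γ' s) (γ' s') = s' - s := by
          rw [hγ'.2.2 s hsQ s' hs', abs_of_nonpos (by linarith)]
          ring
        calc dist (γ s) (γ' s') ≤ dist (γ s) (γ' s) + dist (γ' s) (γ' s') := dist_triangle _ _ _
          _ ≤ 4*δ + (s' - s) := by rw [h2]; linarith
          _ = s + s' - 2*s + 4*δ := by ring
      · rw [min_eq_right hss]
        have hsm : s' ≤ m := le_trans (le_min (le_refl s') hss) (by rw [min_comm] at hmm; exact hmm)
        have hsP : s' ∈ Icc 0 (dist o P) := ⟨hs'.1, by linarith⟩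
        have h1 : dist (γ s') (γ' s') ≤ 4*δ := fellow hδ hgeo hhyp hγ hγ' hs'.1 hsm
        have h2 : dist (γ s) (γ s') = s - s' := by
          rw [hγ.2.2 s hs s' hsP, abs_of_nonneg (by linarith)]
        calc dist (γ s) (γ' s') ≤ dist (γ s) (γ s') + dist (γ s') (γ' s') := dist_triangle _ _ _
          _ ≤ (s - s') + 4*δ := by rw [h2]; linarith
          _ = s + s' - 2*s' + 4*δ := by ring
  -- lower bounds
  have hlow1 : |s - s'| ≤ dist (γ s) (γ' s') := by
    have h := abs_dist_sub_le (γ s) (γ' s') o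
    rw [dist_comm (γ s) o, dist_comm (γ' s') o, hds, hds'] at h
    exact h
  set g := gromovProd dist o (γ s) (γ' s') with hg
  have hdg : dist (γ s) (γ' s') = s + s' - 2*g := by
    simp only [hg, gromovProd, hds, hds']
    ring
  have hgs : g ≤ s := by
    have := gp_le_left o (γ s) (γ' s')
    rw [hds] at this
    exact this
  have hgs' : g ≤ s' := by
    have : g = gromovProd dist o (γ' s') (γ s) := by rw [hg, gp_symm]
    rw [this]
    have h2 := gp_le_left o (γ' s') (γ s)
    rw [hds'] at h2
    exact h2
  have hgm : g ≤ m + 6*δ := by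
    have h4a := gp_four hδ hgeo hhyp o P (γ s) Q
    have h4b := gp_four hδ hgeo hhyp o (γ s) (γ' s') Q
    have hPs : gromovProd dist o P (γ s) = s := gp_geo_pt hγ hs
    have hQs' : gromovProd dist o (γ' s') Q = s' := by
      rw [gp_symm]
      exact gp_geo_pt hγ' hs'
    rw [hPs] at h4a
    rw [← hg, hQs'] at h4b
    have hb1 : min g s' = g := min_eq_left hgs'
    rw [hb1] at h4b
    have hb2 : g - 3*δ ≤ gromovProd dist o (γ s) Q := by linarith
    have hb3 : min s (g - 3*δ) = g - 3*δ := min_eq_right (by linarith)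
    have hb4 : min s (gromovProd dist o (γ s) Q) ≥ g - 3*δ := le_min (by linarith) hb2
    rw [← hm] at h4a
    linarith
  have hlow : s + s' - 2 * min (min s s') m - 12*δ ≤ dist (γ s) (γ' s') := by
    rcases le_total (min s s') m with hmm | hmm
    · rw [min_eq_left hmm]
      rcases le_total s s' with hss | hss
      · rw [min_eq_left hss]
        have : |s - s'| = -(s - s') := abs_of_nonpos (by linarith)
        linarith
      · rw [min_eq_right hss]
        have : |s - s'| = s - s' := abs_of_nonneg (by linarith)
        linarith
    · rw [min_eq_right hmm]
      linarith
  rw [abs_le]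
  constructor <;> linarith


end HCQI


namespace HCQI

lemma log_le_arcosh {x : ℝ} (hx : 1 ≤ x) : Real.log x ≤ arcosh x := by
  rw [arcosh]
  apply Real.log_le_log (by linarith)
  have := Real.sqrt_nonneg (x^2 - 1)
  linarith

lemma arcosh_le_log {x : ℝ} (hx : 1 ≤ x) : arcosh x ≤ Real.log 2 + Real.log x := by
  rw [arcosh, ← Real.log_mul (by norm_num) (by linarith)]
  apply Real.log_le_log (by linarith [Real.sqrt_nonneg (x^2-1)])
  have h1 : Real.sqrt (x^2 - 1) ≤ x := by
    have h2 : Real.sqrt (x^2 - 1) ≤ Real.sqrt (x^2) := Real.sqrt_le_sqrt (by nlinarith)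
    rwa [Real.sqrt_sq (by linarith)] at h2
  linarith

lemma arcosh_nonneg {x : ℝ} (hx : 1 ≤ x) : 0 ≤ arcosh x :=
  le_trans (Real.log_nonneg hx) (log_le_arcosh hx)

lemma log_two_le_one : Real.log 2 ≤ 1 := by
  have h : (2:ℝ) < Real.exp 1 := by
    have := Real.exp_one_gt_d9
    linarith
  have h2 := Real.log_lt_log (by norm_num) h
  rw [Real.log_exp] at h2
  linarith

lemma cosh_le_exp_abs (x : ℝ) : Real.cosh x ≤ Real.exp |x| := by
  rw [Real.cosh_eq]
  have h1 : Real.exp x ≤ Real.exp |x| := Real.exp_le_exp.2 (le_abs_self x)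
  have h2 : Real.exp (-x) ≤ Real.exp |x| := Real.exp_le_exp.2 (neg_le_abs x)
  linarith

lemma exp_abs_le_two_cosh (x : ℝ) : Real.exp |x| ≤ 2 * Real.cosh x := by
  rw [Real.cosh_eq]
  rcases le_total 0 x with h | h
  · rw [abs_of_nonneg h]
    have := Real.exp_pos (-x)
    linarith
  · rw [abs_of_nonpos h]
    have := Real.exp_pos x
    linarith

lemma arcosh_cosh_est (r : ℝ) : abs (arcosh (Real.cosh r) - |r|) ≤ 2 := by
  have h1 : 1 ≤ Real.cosh r := Real.one_le_cosh r
  have hc0 : 0 < Real.cosh r := by linarith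
  have hlow : |r| - 1 ≤ arcosh (Real.cosh r) := by
    have h2 := exp_abs_le_two_cosh r
    have h3 : |r| ≤ Real.log 2 + Real.log (Real.cosh r) := by
      have h4 := Real.log_le_log (Real.exp_pos _) h2
      rw [Real.log_exp, Real.log_mul (by norm_num) (ne_of_gt hc0)] at h4
      exact h4
    have := log_le_arcosh h1
    have := log_two_le_one
    linarith
  have hup : arcosh (Real.cosh r) ≤ |r| + 2 := by
    have h2 := arcosh_le_log h1
    have h3 : Real.log (Real.cosh r) ≤ |r| := by
      have h4 := Real.log_le_log hc0 (cosh_le_exp_abs r)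
      rwa [Real.log_exp] at h4
    have := log_two_le_one
    linarith
  rw [abs_le]
  constructor <;> linarith

lemma max_min_identity {t t' b : ℝ} (ht : 0 ≤ t) (ht' : 0 ≤ t') (hb : 0 ≤ b) :
    max |t - t'| (t + t' - 2*b) = t + t' - 2 * min (min t t') b := by
  rcases le_total t t' with h | h
  · rw [abs_of_nonpos (by linarith), min_eq_left h]
    rcases le_total t b with h1 | h1
    · rw [min_eq_left h1, max_eq_left (by linarith)]
      ring
    · rw [min_eq_right h1, max_eq_right (by linarith)]
  · rw [abs_of_nonneg (by linarith), min_eq_right h]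
    rcases le_total t' b with h1 | h1
    · rw [min_eq_left h1, max_eq_left (by linarith)]
      ring
    · rw [min_eq_right h1, max_eq_right (by linarith)]

lemma min_chain {A B C d1 : ℝ} (hd : 0 ≤ d1) :
    min (min A B) C - 2*d1 ≤ min A (min C B - d1) - d1 := by
  have h1 : min (min A B) C ≤ A := le_trans (min_le_left _ _) (min_le_left _ _)
  have h2 : min (min A B) C ≤ B := le_trans (min_le_left _ _) (min_le_right _ _)
  have h3 : min (min A B) C ≤ C := min_le_right _ _
  have h4 : min (min A B) C - d1 ≤ min A (min C B - d1) :=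
    le_min (by linarith) (by linarith [le_min h3 h2])
  linarith

lemma min_lip {A x y : ℝ} : |min A x - min A y| ≤ |x - y| := by
  rcases le_total A x with h1 | h1 <;> rcases le_total A y with h2 | h2
  · rw [min_eq_left h1, min_eq_left h2]
    simp
  · rw [min_eq_left h1, min_eq_right h2, abs_of_nonneg (by linarith)]
    have := le_abs_self (x - y)
    linarith
  · rw [min_eq_right h1, min_eq_left h2, abs_of_nonpos (by linarith)]
    have h3 := le_abs_self (y - x)
    rw [abs_sub_comm] at h3
    linarith
  · rw [min_eq_right h1, min_eq_right h2]

lemma min_scale {lam : ℝ} (h : 0 ≤ lam) (A B : ℝ) : lam * min A B = min (lam*A) (lam*B) := by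
  rcases le_total A B with hc | hc
  · rw [min_eq_left hc, min_eq_left (mul_le_mul_of_nonneg_left hc h)]
  · rw [min_eq_right hc, min_eq_right (mul_le_mul_of_nonneg_left hc h)]

lemma min_sub_eps {A B ε : ℝ} (hε : 0 ≤ ε) : min A B - ε ≤ min A (B - ε) :=
  le_min (by linarith [min_le_left A B]) (by linarith [min_le_right A B])

/-- the key comparison for the hyperbolic cone distance, positive angle case -/
lemma cone_est {t t' θ : ℝ} (ht : 0 ≤ t) (ht' : 0 ≤ t') (hθ : 0 < θ) (hθπ : θ ≤ Real.pi) :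
    |arcosh (Real.cosh t * Real.cosh t' - Real.sinh t * Real.sinh t' * Real.cos θ)
      - (t + t' - 2 * min (min t t') (- Real.log (Real.sin (θ/2))))| ≤ 3 := by
  have hpi := Real.pi_pos
  set s := Real.sin (θ/2) with hs
  have hs0 : 0 < s := Real.sin_pos_of_pos_of_lt_pi (by linarith) (by linarith)
  have hs1 : s ≤ 1 := Real.sin_le_one _
  set β := -Real.log s with hβ
  have hβ0 : 0 ≤ β := by
    rw [hβ, neg_nonneg]
    exact Real.log_nonpos (le_of_lt hs0) hs1
  have hsq : s^2 = 1/2 - Real.cos θ / 2 := by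
    have h := Real.sin_sq_eq_half_sub (θ/2)
    rw [← hs] at h
    have h2 : 2 * (θ/2) = θ := by ring
    rw [h2] at h
    exact h
  have hsinh_t : 0 ≤ Real.sinh t := Real.sinh_nonneg_iff.2 ht
  have hsinh_t' : 0 ≤ Real.sinh t' := Real.sinh_nonneg_iff.2 ht'
  have hEeq : Real.cosh t * Real.cosh t' - Real.sinh t * Real.sinh t' * Real.cos θ
      = Real.cosh (t - t') + 2 * (Real.sinh t * Real.sinh t') * s^2 := by
    rw [Real.cosh_sub, hsq]
    ring
  rw [hEeq]
  set E := Real.cosh (t - t') + 2 * (Real.sinh t * Real.sinh t') * s^2 with hEdef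
  have hcosh1 := Real.one_le_cosh (t - t')
  have hterm0 : 0 ≤ 2 * (Real.sinh t * Real.sinh t') * s^2 := by positivity
  have hE1 : 1 ≤ E := by rw [hEdef]; linarith
  have hE0 : 0 < E := by linarith
  have hEcosh : Real.cosh (t - t') ≤ E := by rw [hEdef]; linarith
  have hEterm : 2 * (Real.sinh t * Real.sinh t') * s^2 ≤ E := by rw [hEdef]; linarith
  have hsexp : s^2 = Real.exp (2 * Real.log s) := by
    rw [two_mul, Real.exp_add, Real.exp_log hs0]
    ring
  have hExp : Real.exp (t + t' - 2*β) = Real.exp t * Real.exp t' * s^2 := by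
    rw [hsexp, ← Real.exp_add, ← Real.exp_add, hβ]
    ring_nf
  set M := max |t - t'| (t + t' - 2*β) with hM
  -- upper bound for E
  have hsinh_le : Real.sinh t ≤ Real.exp t / 2 := by
    rw [Real.sinh_eq]
    have := Real.exp_pos (-t)
    linarith
  have hsinh_le' : Real.sinh t' ≤ Real.exp t' / 2 := by
    rw [Real.sinh_eq]
    have := Real.exp_pos (-t')
    linarith
  have hEup : E ≤ 2 * Real.exp M := by
    have h1 : Real.cosh (t - t') ≤ Real.exp M := by
      refine le_trans (cosh_le_exp_abs _) (Real.exp_le_exp.2 (le_max_left _ _))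
    have h2 : 2 * (Real.sinh t * Real.sinh t') * s^2 ≤ Real.exp M := by
      have hAB : Real.sinh t * Real.sinh t' ≤ (Real.exp t / 2) * (Real.exp t' / 2) :=
        mul_le_mul hsinh_le hsinh_le' hsinh_t' (by positivity)
      have h4 := mul_le_mul_of_nonneg_right hAB (sq_nonneg s)
      have h3 : 2 * (Real.sinh t * Real.sinh t') * s^2 ≤ Real.exp t * Real.exp t' * s^2 := by
        nlinarith [mul_nonneg (mul_nonneg (Real.exp_pos t).le (Real.exp_pos t').le) (sq_nonneg s)]
      rw [← hExp] at h3
      exact le_trans h3 (Real.exp_le_exp.2 (le_max_right _ _))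
    rw [hEdef]
    linarith
  have hlogEup : Real.log E ≤ M + Real.log 2 := by
    have h := Real.log_le_log hE0 hEup
    rw [Real.log_mul (by norm_num) (ne_of_gt (Real.exp_pos M)), Real.log_exp] at h
    linarith
  -- lower bounds for log E
  have hlogE1 : |t - t'| - Real.log 2 ≤ Real.log E := by
    have h2 : Real.exp |t - t'| ≤ 2 * E := by
      have := exp_abs_le_two_cosh (t - t')
      linarith
    have h3 := Real.log_le_log (Real.exp_pos _) h2
    rw [Real.log_exp, Real.log_mul (by norm_num) (ne_of_gt hE0)] at h3
    linarith
  have hlog8 : Real.log 8 ≤ 3 := by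
    have h8 : (8:ℝ) = 2^3 := by norm_num
    rw [h8, Real.log_pow]
    have := log_two_le_one
    push_cast
    linarith
  have hlogE2 : t + t' - 2*β - 3 ≤ Real.log E := by
    rcases le_or_gt 1 t with hT | hT
    · rcases le_or_gt 1 t' with hT' | hT'
      · -- both large
        have hkey : ∀ r : ℝ, 1 ≤ r → Real.exp r / 4 ≤ Real.sinh r := by
          intro r hr
          have h3 : (3:ℝ) ≤ Real.exp 2 := by
            have := Real.add_one_le_exp 2
            linarith
          have h4 : Real.exp 2 ≤ Real.exp (2*r) := Real.exp_le_exp.2 (by linarith)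
          have h5 : Real.exp r = Real.exp (2*r) * Real.exp (-r) := by
            rw [← Real.exp_add]
            ring_nf
          have hepos := Real.exp_pos (-r)
          have h6 : 3 * Real.exp (-r) ≤ Real.exp r := by
            rw [h5]
            nlinarith
          rw [Real.sinh_eq]
          have := Real.exp_pos r
          linarith
        have h1 := hkey t hT
        have h2 := hkey t' hT'
        have hprod : Real.exp t/4 * (Real.exp t'/4) ≤ Real.sinh t * Real.sinh t' :=
          mul_le_mul h1 h2 (by positivity) hsinh_t
        have h3 : Real.exp (t + t' - 2*β) / 8 ≤ E := by
          rw [hExp]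
          have h4 := mul_le_mul_of_nonneg_right hprod (sq_nonneg s)
          nlinarith [hEterm]
        have h5 := Real.log_le_log (by positivity) h3
        rw [Real.log_div (ne_of_gt (Real.exp_pos _)) (by norm_num), Real.log_exp] at h5
        linarith
      · have h1 := le_abs_self (t - t')
        have := log_two_le_one
        linarith
    · have h1 := neg_abs_le (t - t')
      have := log_two_le_one
      linarith
  have hMid := max_min_identity ht ht' hβ0
  have hla := log_le_arcosh hE1
  have hau := arcosh_le_log hE1
  have hMle : M ≤ Real.log E + 3 := by
    apply max_le
    · have := log_two_le_one
      linarith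
    · linarith
  have hl2 := log_two_le_one
  rw [← hMid, ← hM, abs_le]
  constructor <;> linarith

end HCQI


/-- **Theorem (Statement 6).** Let `X` be a geodesic `δ`-hyperbolic metric space,
`Z ⊆ ∂X` a compact subspace of its sequential Gromov boundary, endowed with a visual
metric `ρ`.  Then the hyperbolic cone `Co Z` over `(Z,ρ)` quasi-isometrically embeds
into `X`. -/
theorem hyperbolic_cone_qi_embeds
    (X : Type*) [MetricSpace X] (δ : ℝ) (hδ : 0 ≤ δ)
    (hgeo : GeodesicSpace X) (hhyp : SlimTriangles X δ)
    (Z : Set (GromovBoundary (dist : X → X → ℝ))) (hZ : IsCompact Z)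
    (o : X) (ρ : ↥Z → ↥Z → ℝ) (hρ : IsMetricOn ρ)
    (hvis : IsVisualMetric (dist : X → X → ℝ) o Z ρ) :
    ∃ f : HypCone ↥Z → X,
      QIEmbWith (hypConeDist ρ (diamOf ρ)) (dist : X → X → ℝ) f := by
  classical
  obtain ⟨k₁, k₂, a, hk₁, hk₂, ha, hvis'⟩ := hvis
  have ha0 : (0:ℝ) < a := by linarith
  set lam := Real.log a with hlam
  have hlam0 : 0 < lam := Real.log_pos ha
  have hfour : ∀ o' x y z : X, min (gromovProd dist o' x y) (gromovProd dist o' y z) - 3*δ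
      ≤ gromovProd dist o' x z := HCQI.gp_four hδ hgeo hhyp
  have hrepex : ∀ z : ↥Z, ∃ u : {u : ℕ → X // IsGromovSeq (dist : X → X → ℝ) u},
      Quot.mk _ u = z.1 := fun z => Quot.exists_rep z.1
  choose rep hrep using hrepex
  have hequiv : Equivalence (fun u v : {u : ℕ → X // IsGromovSeq (dist : X → X → ℝ) u} =>
      GromovSeqEquiv dist u.1 v.1) := by
    constructor
    · exact fun u => u.2
    · intro u v h o'
      rw [Filter.tendsto_atTop]
      intro c
      rw [HCQI.eventually_pair]
      obtain ⟨N, hN⟩ := HCQI.eventually_pair.1 ((h o').eventually_ge_atTop c)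
      refine ⟨N, fun m n hm hn => ?_⟩
      show c ≤ gromovProd dist o' (v.1 m) (u.1 n)
      have h2 := hN n m hn hm
      rwa [HCQI.gp_symm] at h2
    · intro u v w h1 h2 o'
      rw [Filter.tendsto_atTop]
      intro c
      rw [HCQI.eventually_pair]
      obtain ⟨N1, hN1⟩ := HCQI.eventually_pair.1 ((h1 o').eventually_ge_atTop (c + 3*δ))
      obtain ⟨N2, hN2⟩ := HCQI.eventually_pair.1 ((h2 o').eventually_ge_atTop (c + 3*δ))
      refine ⟨max N1 N2, fun m n hm hn => ?_⟩
      show c ≤ gromovProd dist o' (u.1 m) (w.1 n)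
      have hA := hN1 m (max N1 N2) (le_trans (le_max_left _ _) hm) (le_max_left _ _)
      have hB := hN2 (max N1 N2) n (le_max_right _ _) (le_trans (le_max_right _ _) hn)
      have h4 := hfour o' (u.1 m) (v.1 (max N1 N2)) (w.1 n)
      have h5 := le_min hA hB
      linarith
  have hquotEq : ∀ u v : {u : ℕ → X // IsGromovSeq (dist : X → X → ℝ) u},
      Quot.mk _ u = Quot.mk _ v → GromovSeqEquiv dist u.1 v.1 :=
    fun u v h => (hequiv.eqvGen_iff).1 (Quot.eq.1 h)
  have hNex : ∀ (z : ↥Z) (c : ℝ), ∃ N : ℕ, ∀ m n : ℕ, N ≤ m → N ≤ n →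
      c ≤ gromovProd dist o ((rep z).1 m) ((rep z).1 n) :=
    fun z c => HCQI.eventually_pair.1 (((rep z).2 o).eventually_ge_atTop c)
  choose Nf hNf using hNex
  have hgammaex : ∀ (z : ↥Z) (c : ℝ), ∃ γ : ℝ → X,
      IsGeodesicSegment γ o ((rep z).1 (Nf z c)) := fun z c => hgeo o _
  choose gf hgf using hgammaex
  set f : HypCone ↥Z → X := fun x => gf x.1 (x.2.1 / lam) (x.2.1 / lam) with hfdef
  have hbl : ∀ z w : ↥Z, (0:EReal) ≤
      Filter.liminf (fun p : ℕ × ℕ =>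
        ((gromovProd dist o ((rep z).1 p.1) ((rep w).1 p.2) : ℝ) : EReal)) atTop := by
    intro z w
    refine Filter.le_liminf_of_le (by isBoundedDefault) ?_
    apply Filter.Eventually.of_forall
    intro p
    exact_mod_cast HCQI.gp_nonneg o ((rep z).1 p.1) ((rep w).1 p.2)
  have hbmem : ∀ z w : ↥Z,
      Filter.liminf (fun p : ℕ × ℕ =>
        ((gromovProd dist o ((rep z).1 p.1) ((rep w).1 p.2) : ℝ) : EReal)) atTop
      ≤ bProd dist o z.1 w.1 := by
    intro z w
    apply le_sSup
    exact ⟨rep z, rep w, hrep z, hrep w, rfl⟩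
  have hb0 : ∀ z w : ↥Z, (0:EReal) ≤ bProd dist o z.1 w.1 :=
    fun z w => le_trans (hbl z w) (hbmem z w)
  have hgauge1 : ∀ z w : ↥Z, negExpGauge a (bProd dist o z.1 w.1) ≤ 1 := by
    intro z w
    unfold negExpGauge
    split_ifs with h
    · norm_num
    · apply Real.rpow_le_one_of_one_le_of_nonpos (le_of_lt ha)
      rw [neg_nonpos]
      have h3 := EReal.toReal_le_toReal (hb0 z w) (by norm_num) h
      simpa using h3
  have hρub : ∀ z w : ↥Z, ρ z w ≤ k₂ := by
    intro z w
    have h1 := (hvis' z w).2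
    have h2 := hgauge1 z w
    nlinarith [hρ.1 z w, (hvis' z w).1]
  have hbddA : BddAbove {r : ℝ | ∃ x y : ↥Z, r = ρ x y} := by
    refine ⟨k₂, ?_⟩
    rintro r ⟨x, y, rfl⟩
    exact hρub x y
  set D := diamOf ρ with hDdef
  have hρD : ∀ z w : ↥Z, ρ z w ≤ D := fun z w => le_csSup hbddA ⟨z, w, rfl⟩
  have hpi := Real.pi_pos
  set Cβ := |Real.log (Real.pi / D)| + |Real.log k₁| + |Real.log k₂| + Real.log Real.pi
    with hCβ
  have hlogpi : 0 ≤ Real.log Real.pi := Real.log_nonneg (by linarith [Real.pi_gt_three])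
  have hCβ0 : 0 ≤ Cβ := by
    rw [hCβ]
    have := abs_nonneg (Real.log (Real.pi / D))
    have := abs_nonneg (Real.log k₁)
    have := abs_nonneg (Real.log k₂)
    linarith
  set CF := 54*δ + (5 + 2*Cβ)/lam with hCF
  have hCF0 : 0 ≤ CF := by
    have h1 : 0 ≤ (5 + 2*Cβ)/lam := div_nonneg (by linarith) hlam0.le
    rw [hCF]
    linarith
  set LL := max (max lam lam⁻¹) 1 with hLL
  have hLL1 : (1:ℝ) ≤ LL := le_max_right _ _
  have hLLpos : (0:ℝ) < LL := by linarith
  have hLLlam : lam ≤ LL := le_trans (le_max_left _ _) (le_max_left _ _)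
  have hLLinv : lam⁻¹ ≤ LL := le_trans (le_max_right _ _) (le_max_left _ _)
  refine ⟨f, LL, CF, hLL1, hCF0, ?_⟩
  rintro ⟨ξ, t, ht⟩ ⟨η, t', ht'⟩
  set t1 := t / lam with ht1def
  set t2 := t' / lam with ht2def
  have ht10 : 0 ≤ t1 := div_nonneg ht hlam0.le
  have ht20 : 0 ≤ t2 := div_nonneg ht' hlam0.le
  have htlam : t = lam * t1 := by
    rw [ht1def]
    field_simp
  have htlam' : t' = lam * t2 := by
    rw [ht2def]
    field_simp
  set P := (rep ξ).1 (Nf ξ t1) with hP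
  set Q := (rep η).1 (Nf η t2) with hQ
  set γ := gf ξ t1 with hγdef
  set γ' := gf η t2 with hγ'def
  have hγ : IsGeodesicSegment γ o P := hgf ξ t1
  have hγ' : IsGeodesicSegment γ' o Q := hgf η t2
  have ht1P : t1 ≤ dist o P := by
    have h1 : t1 ≤ gromovProd dist o P P := hNf ξ t1 (Nf ξ t1) (Nf ξ t1) (le_refl _) (le_refl _)
    rwa [HCQI.gp_self] at h1
  have ht2Q : t2 ≤ dist o Q := by
    have h1 : t2 ≤ gromovProd dist o Q Q := hNf η t2 (Nf η t2) (Nf η t2) (le_refl _) (le_refl _)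
    rwa [HCQI.gp_self] at h1
  have hmem1 : t1 ∈ Icc 0 (dist o P) := ⟨ht10, ht1P⟩
  have hmem2 : t2 ∈ Icc 0 (dist o Q) := ⟨ht20, ht2Q⟩
  have hfx : f ⟨ξ, ⟨t, ht⟩⟩ = γ t1 := rfl
  have hfy : f ⟨η, ⟨t', ht'⟩⟩ = γ' t2 := rfl
  set m := gromovProd dist o P Q with hmdef
  have hKey : |dist (γ t1) (γ' t2) - (t1 + t2 - 2 * min (min t1 t2) m)| ≤ 12*δ :=
    HCQI.dist_est hδ hgeo hhyp hγ hγ' hmem1 hmem2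
  set dA := hypConeDist ρ D ⟨ξ, ⟨t, ht⟩⟩ ⟨η, ⟨t', ht'⟩⟩ with hdAdef
  have hconeval0 : dA = arcosh (Real.cosh t * Real.cosh t'
      - Real.sinh t * Real.sinh t' * Real.cos (Real.pi / D * ρ ξ η)) := rfl
  have hdA0 : 0 ≤ dA := by
    rw [hconeval0]
    apply HCQI.arcosh_nonneg
    have h2 : Real.sinh t * Real.sinh t' * Real.cos (Real.pi / D * ρ ξ η)
        ≤ Real.sinh t * Real.sinh t' := by
      nlinarith [Real.sinh_nonneg_iff.2 ht, Real.sinh_nonneg_iff.2 ht',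
        Real.cos_le_one (Real.pi / D * ρ ξ η), mul_nonneg (Real.sinh_nonneg_iff.2 ht)
          (Real.sinh_nonneg_iff.2 ht')]
    have h3 := Real.cosh_sub t t'
    have h4 := Real.one_le_cosh (t - t')
    linarith
  have hdivLL : dA / LL ≤ dA / lam := by
    rw [div_le_div_iff₀ hLLpos hlam0]
    nlinarith
  rw [hfx, hfy]
  clear_value f lam t1 t2 P Q γ γ' m dA D Cβ CF LL
  by_cases hbtop : bProd dist o ξ.1 η.1 = ⊤
  · -- equal points case
    have hρ0 : ρ ξ η = 0 := by
      have h1 := (hvis' ξ η).2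
      rw [hbtop] at h1
      have h2 : negExpGauge a ⊤ = 0 := by simp [negExpGauge]
      rw [h2, mul_zero] at h1
      exact le_antisymm h1 (hρ.1 ξ η)
    have hξη : ξ = η := (hρ.2.2.1 ξ η).1 hρ0
    have he : GromovSeqEquiv dist (rep ξ).1 (rep η).1 :=
      hquotEq _ _ (by rw [hrep ξ, hrep η, hξη])
    -- m ≥ min t1 t2 − 6δ
    have hm6 : min t1 t2 - 6*δ ≤ m := by
      obtain ⟨M0, hM0⟩ := HCQI.eventually_pair.1 ((he o).eventually_ge_atTop (min t1 t2))
      have hA := hNf ξ t1 (Nf ξ t1) (max (Nf ξ t1) M0) (le_refl _) (le_max_left _ _)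
      rw [← hP] at hA
      have hB := hNf η t2 (max (Nf η t2) M0) (Nf η t2) (le_max_left _ _) (le_refl _)
      rw [← hQ] at hB
      have hC : min t1 t2 ≤ gromovProd dist o ((rep ξ).1 (max (Nf ξ t1) M0))
          ((rep η).1 (max (Nf η t2) M0)) :=
        hM0 _ _ (le_max_right _ _) (le_max_right _ _)
      have h4a := hfour o P ((rep ξ).1 (max (Nf ξ t1) M0)) Q
      rw [← hmdef] at h4a
      have h4b := hfour o ((rep ξ).1 (max (Nf ξ t1) M0)) ((rep η).1 (max (Nf η t2) M0)) Q
      have h5 : min (min t1 t2) t2 - 3*δ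
          ≤ gromovProd dist o ((rep ξ).1 (max (Nf ξ t1) M0)) Q := by
        linarith [min_le_min hC hB]
      have h6 : min t1 (min (min t1 t2) t2 - 3*δ) - 3*δ ≤ m := by
        linarith [min_le_min hA h5]
      have h7 : min t1 t2 ≤ min t1 (min (min t1 t2) t2 - 3*δ) + 3*δ := by
        have a1 : min t1 t2 - 3*δ ≤ t1 := by linarith [min_le_left t1 t2]
        have a2 : min t1 t2 ≤ min (min t1 t2) t2 := le_min (le_refl _) (min_le_right _ _)
        have a3 : min t1 t2 - 3*δ ≤ min (min t1 t2) t2 - 3*δ := by linarith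
        linarith [le_min a1 a3]
      linarith
    have hm3 : min (min t1 t2) m ≤ min t1 t2 := min_le_left _ _
    have hm4 : min t1 t2 - 6*δ ≤ min (min t1 t2) m :=
      le_min (by linarith [hδ]) hm6
    have habs := HCQI.abs_eq_sum_sub_two_min t1 t2
    have hdX : abs (dist (γ t1) (γ' t2) - |t1 - t2|) ≤ 24*δ := by
      rw [abs_le] at hKey ⊢
      rw [habs]
      constructor <;> linarith [hKey.1, hKey.2, hm3, hm4]
    have hconeval : dA = arcosh (Real.cosh (t - t')) := by
      rw [hconeval0, hρ0, mul_zero, Real.cos_zero, mul_one, ← Real.cosh_sub]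
    have hcest := HCQI.arcosh_cosh_est (t - t')
    have habst : |t - t'| = lam * |t1 - t2| := by
      rw [htlam, htlam', ← mul_sub, abs_mul, abs_of_pos hlam0]
    rw [abs_le] at hdX hcest
    rw [← hconeval] at hcest
    have h2lam : 2/lam ≤ (5 + 2*Cβ)/lam := by
      have h3 : (5 + 2*Cβ)/lam - 2/lam = (3 + 2*Cβ)/lam := by ring
      have h4 : 0 ≤ (3 + 2*Cβ)/lam := div_nonneg (by linarith) hlam0.le
      linarith
    constructor
    · have h1 : dA / lam ≤ |t1 - t2| + 2/lam := by
        rw [div_le_iff₀ hlam0]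
        have h5 : (|t1 - t2| + 2/lam) * lam = lam * |t1 - t2| + 2 := by
          field_simp
        rw [h5]
        linarith [hcest.2, habst]
      linarith [hdivLL, hdX.1, h1, h2lam]
    · have h1 : |t1 - t2| ≤ dA * lam⁻¹ + 2/lam := by
        have h5 : |t1 - t2| * lam ≤ dA + 2 := by linarith [hcest.1, habst]
        have h6 := (le_div_iff₀ hlam0).2 h5
        have h7 : (dA + 2)/lam = dA * lam⁻¹ + 2/lam := by ring
        linarith
      have h2 : dA * lam⁻¹ ≤ dA * LL := mul_le_mul_of_nonneg_left hLLinv hdA0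
      have h8 : dA * LL = LL * dA := mul_comm _ _
      have e1 : dist (γ t1) (γ' t2) ≤ |t1 - t2| + 24*δ := by linarith [hdX.2]
      have e2 : dist (γ t1) (γ' t2) ≤ LL * dA + 2/lam + 24*δ := by linarith [e1, h1, h2, h8]
      have e3 : 2/lam + 24*δ ≤ CF := by rw [hCF]; linarith [h2lam]
      linarith only [e2, e3]
  · -- general case: bProd finite
    set Lv := Filter.liminf (fun p : ℕ × ℕ =>
        ((gromovProd dist o ((rep ξ).1 p.1) ((rep η).1 p.2) : ℝ) : EReal)) atTop with hLvdef
    have hLv0 : (0:EReal) ≤ Lv := hbl ξ η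
    have hLvb : Lv ≤ bProd dist o ξ.1 η.1 := hbmem ξ η
    clear_value Lv
    have hLvtop : Lv ≠ ⊤ := by
      intro hh
      rw [hh] at hLvb
      exact hbtop (top_le_iff.1 hLvb)
    have hLvbot : Lv ≠ ⊥ := by
      intro hh
      rw [hh] at hLv0
      simp at hLv0
    set Lr := Lv.toReal with hLrdef
    have hLvLr : Lv = (Lr : EReal) := (EReal.coe_toReal hLvtop hLvbot).symm
    clear_value Lr
    have hbbot : bProd dist o ξ.1 η.1 ≠ ⊥ := by
      intro hh
      rw [hh] at hLvb
      have h2 := le_trans hLv0 hLvb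
      simp at h2
    set br := (bProd dist o ξ.1 η.1).toReal with hbrdef
    have hbbr : bProd dist o ξ.1 η.1 = (br : EReal) := (EReal.coe_toReal hbtop hbbot).symm
    clear_value br
    have hLrbr : Lr ≤ br := by
      rw [hLvLr, hbbr] at hLvb
      exact_mod_cast hLvb
    have hbr0 : 0 ≤ br := by
      have h1 := le_trans hLv0 hLvb
      rw [hbbr] at h1
      exact_mod_cast h1
    have hbLv : bProd dist o ξ.1 η.1 ≤ Lv + ((6*δ : ℝ) : EReal) := by
      simp only [bProd]
      apply sSup_le
      rintro l ⟨u', v', hu', hv', rfl⟩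
      apply HCQI.ereal_le_of_forall_lt
      intro c hc
      obtain ⟨M0, hM0⟩ := HCQI.eventually_pair.1 (eventually_lt_of_lt_liminf hc)
      have e1 : GromovSeqEquiv dist u'.1 (rep ξ).1 := hquotEq _ _ (by rw [hu', hrep ξ])
      have e2 : GromovSeqEquiv dist v'.1 (rep η).1 := hquotEq _ _ (by rw [hv', hrep η])
      obtain ⟨M1, hM1⟩ := HCQI.eventually_pair.1 ((e1 o).eventually_ge_atTop c)
      obtain ⟨M2, hM2⟩ := HCQI.eventually_pair.1 ((e2 o).eventually_ge_atTop c)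
      have hev : ∀ m' n' : ℕ, max M0 (max M1 M2) ≤ m' → max M0 (max M1 M2) ≤ n' →
          c - 6*δ ≤ gromovProd dist o ((rep ξ).1 m') ((rep η).1 n') := by
        intro m' n' hm' hn'
        have hm'0 : M0 ≤ m' := le_trans (le_max_left _ _) hm'
        have hn'0 : M0 ≤ n' := le_trans (le_max_left _ _) hn'
        have hm'1 : M1 ≤ m' := le_trans (le_trans (le_max_left _ _) (le_max_right _ _)) hm'
        have hn'2 : M2 ≤ n' := le_trans (le_trans (le_max_right _ _) (le_max_right _ _)) hn'
        have hc1 : c ≤ gromovProd dist o (u'.1 m') (v'.1 n') := by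
          have h2 := hM0 m' n' hm'0 hn'0
          exact_mod_cast le_of_lt h2
        have hc2 : c ≤ gromovProd dist o (u'.1 m') ((rep ξ).1 m') := hM1 m' m' hm'1 hm'1
        have hc3 : c ≤ gromovProd dist o (v'.1 n') ((rep η).1 n') := hM2 n' n' hn'2 hn'2
        have h4a := hfour o ((rep ξ).1 m') (u'.1 m') ((rep η).1 n')
        have h4b := hfour o (u'.1 m') (v'.1 n') ((rep η).1 n')
        have hc2' : c ≤ gromovProd dist o ((rep ξ).1 m') (u'.1 m') := by
          rwa [HCQI.gp_symm] at hc2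
        have h5 : c - 3*δ ≤ gromovProd dist o (u'.1 m') ((rep η).1 n') := by
          linarith [le_min hc1 hc3]
        have h6 : c - 3*δ ≤ min (gromovProd dist o ((rep ξ).1 m') (u'.1 m'))
            (gromovProd dist o (u'.1 m') ((rep η).1 n')) := le_min (by linarith) h5
        linarith
      have hLvge : ((c - 6*δ : ℝ) : EReal) ≤ Lv := by
        rw [hLvdef]
        refine Filter.le_liminf_of_le (by isBoundedDefault) ?_
        rw [HCQI.eventually_pair]
        exact ⟨max M0 (max M1 M2), fun m' n' hm' hn' => by
          exact_mod_cast hev m' n' hm' hn'⟩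
      calc (c : EReal) = ((c - 6*δ : ℝ) : EReal) + ((6*δ : ℝ) : EReal) := by
            rw [← EReal.coe_add]
            norm_num
        _ ≤ Lv + ((6*δ : ℝ) : EReal) := add_le_add_left hLvge _
    have hbrLr : br ≤ Lr + 6*δ := by
      rw [hbbr, hLvLr, ← EReal.coe_add] at hbLv
      exact_mod_cast hbLv
    have hmlow' : min (min t1 t2) Lr - 6*δ ≤ m := by
      apply HCQI.real_le_of_forall_eps
      intro ε hε
      have hclt : ((Lr - ε : ℝ) : EReal) < Lv := by
        rw [hLvLr]
        exact_mod_cast (show Lr - ε < Lr by linarith)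
      rw [hLvdef] at hclt
      obtain ⟨M0, hM0⟩ := HCQI.eventually_pair.1 (eventually_lt_of_lt_liminf hclt)
      have hA := hNf ξ t1 (Nf ξ t1) (max (Nf ξ t1) M0) (le_refl _) (le_max_left _ _)
      rw [← hP] at hA
      have hB := hNf η t2 (max (Nf η t2) M0) (Nf η t2) (le_max_left _ _) (le_refl _)
      rw [← hQ] at hB
      have hC : Lr - ε ≤ gromovProd dist o ((rep ξ).1 (max (Nf ξ t1) M0))
          ((rep η).1 (max (Nf η t2) M0)) := by
        have h2 := hM0 _ _ (le_max_right (Nf ξ t1) M0) (le_max_right (Nf η t2) M0)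
        exact_mod_cast le_of_lt h2
      have h4a := hfour o P ((rep ξ).1 (max (Nf ξ t1) M0)) Q
      rw [← hmdef] at h4a
      have h4b := hfour o ((rep ξ).1 (max (Nf ξ t1) M0)) ((rep η).1 (max (Nf η t2) M0)) Q
      have h5 : min (Lr - ε) t2 - 3*δ
          ≤ gromovProd dist o ((rep ξ).1 (max (Nf ξ t1) M0)) Q := by
        linarith [min_le_min hC hB]
      have h6 : min t1 (min (Lr - ε) t2 - 3*δ) - 3*δ ≤ m := by
        linarith [min_le_min hA h5]
      have h8 := HCQI.min_chain (A := t1) (B := t2) (C := Lr - ε)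
        (show (0:ℝ) ≤ 3*δ by linarith)
      have h9 := HCQI.min_sub_eps (A := min t1 t2) (B := Lr) (ε := ε) hε.le
      linarith
    have hmlow : min (min t1 t2) br - 12*δ ≤ m := by
      have h2 : min (min t1 t2) br - 6*δ ≤ min (min t1 t2) Lr :=
        le_min (by linarith [min_le_left (min t1 t2) br])
          (by linarith [min_le_right (min t1 t2) br, hbrLr])
      linarith
    have hmup : min (min t1 t2) m ≤ br + 6*δ := by
      have hev : ∀ m' n' : ℕ, max (Nf ξ t1) (Nf η t2) ≤ m' → max (Nf ξ t1) (Nf η t2) ≤ n' →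
          min (min t1 t2) m - 6*δ ≤ gromovProd dist o ((rep ξ).1 m') ((rep η).1 n') := by
        intro m' n' hm' hn'
        have hA := hNf ξ t1 m' (Nf ξ t1) (le_trans (le_max_left _ _) hm') (le_refl _)
        rw [← hP] at hA
        have hB := hNf η t2 (Nf η t2) n' (le_refl _) (le_trans (le_max_right _ _) hn')
        rw [← hQ] at hB
        have h4a := hfour o ((rep ξ).1 m') P ((rep η).1 n')
        have h4b := hfour o P Q ((rep η).1 n')
        rw [← hmdef] at h4b
        have h5 : min m t2 - 3*δ ≤ gromovProd dist o P ((rep η).1 n') := by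
          linarith [min_le_min (le_refl m) hB]
        have h6 : min t1 (min m t2 - 3*δ) - 3*δ
            ≤ gromovProd dist o ((rep ξ).1 m') ((rep η).1 n') := by
          linarith [min_le_min hA h5]
        have h8 := HCQI.min_chain (A := t1) (B := t2) (C := m)
          (show (0:ℝ) ≤ 3*δ by linarith)
        linarith
      have hLvge : ((min (min t1 t2) m - 6*δ : ℝ) : EReal) ≤ Lv := by
        rw [hLvdef]
        refine Filter.le_liminf_of_le (by isBoundedDefault) ?_
        rw [HCQI.eventually_pair]
        exact ⟨max (Nf ξ t1) (Nf η t2), fun m' n' hm' hn' => by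
          exact_mod_cast hev m' n' hm' hn'⟩
      have h7 : min (min t1 t2) m - 6*δ ≤ Lr := by
        rw [hLvLr] at hLvge
        exact_mod_cast hLvge
      linarith
    have hmd1 : min (min t1 t2) br - 12*δ ≤ min (min t1 t2) m :=
      le_min (by linarith [min_le_left (min t1 t2) br]) (by linarith [hmlow])
    have hmd2 : min (min t1 t2) m ≤ min (min t1 t2) br + 6*δ := by
      have h2 := le_min (show min (min t1 t2) m - 6*δ ≤ min t1 t2 by
          linarith [min_le_left (min t1 t2) m])
        (show min (min t1 t2) m - 6*δ ≤ br by linarith [hmup])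
      linarith
    have hdX1 : (t1 + t2 - 2 * min (min t1 t2) br) - 36*δ ≤ dist (γ t1) (γ' t2) := by
      rw [abs_le] at hKey
      linarith [hKey.1, hmd2]
    have hdX2 : dist (γ t1) (γ' t2) ≤ (t1 + t2 - 2 * min (min t1 t2) br) + 36*δ := by
      rw [abs_le] at hKey
      linarith [hKey.2, hmd1]
    -- cone side
    have hgauge : negExpGauge a (bProd dist o ξ.1 η.1) = a ^ (-br) := by
      simp only [negExpGauge, if_neg hbtop]
      rw [hbrdef]
      rfl
    have hGpos : (0:ℝ) < a ^ (-br) := Real.rpow_pos_of_pos ha0 _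
    have hv1 : k₁ * a ^ (-br) ≤ ρ ξ η := by
      have h1 := (hvis' ξ η).1
      rwa [hgauge] at h1
    have hv2 : ρ ξ η ≤ k₂ * a ^ (-br) := by
      have h1 := (hvis' ξ η).2
      rwa [hgauge] at h1
    have hρpos : 0 < ρ ξ η := lt_of_lt_of_le (by positivity) hv1
    have hDpos : 0 < D := lt_of_lt_of_le hρpos (hρD ξ η)
    set θ := Real.pi / D * ρ ξ η with hθdef
    have hθ0 : 0 < θ := mul_pos (div_pos hpi hDpos) hρpos
    have hθπ : θ ≤ Real.pi := by
      have h1 : Real.pi / D * ρ ξ η ≤ Real.pi / D * D :=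
        mul_le_mul_of_nonneg_left (hρD ξ η) (le_of_lt (div_pos hpi hDpos))
      rwa [div_mul_cancel₀ _ (ne_of_gt hDpos)] at h1
    have hconevalθ : dA = arcosh (Real.cosh t * Real.cosh t'
        - Real.sinh t * Real.sinh t' * Real.cos θ) := hconeval0
    have hcest := HCQI.cone_est ht ht' hθ0 hθπ
    clear_value θ
    set βv := -Real.log (Real.sin (θ/2)) with hβvdef
    clear_value βv
    have hsin0 : 0 < Real.sin (θ/2) :=
      Real.sin_pos_of_pos_of_lt_pi (by linarith) (by linarith)
    have hsinlt : Real.sin (θ/2) ≤ θ := by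
      have h1 := Real.sin_lt (show 0 < θ/2 by linarith)
      linarith
    have hsinge : θ / Real.pi ≤ Real.sin (θ/2) := by
      have h1 := Real.mul_le_sin (x := θ/2) (by linarith) (by linarith)
      have h2 : 2 / Real.pi * (θ/2) = θ / Real.pi := by ring
      linarith [h2 ▸ h1]
    have hlogsin_up : Real.log (Real.sin (θ/2)) ≤ Real.log θ :=
      Real.log_le_log hsin0 hsinlt
    have hlogsin_low : Real.log θ - Real.log Real.pi ≤ Real.log (Real.sin (θ/2)) := by
      have h1 := Real.log_le_log (by positivity) hsinge
      rwa [Real.log_div (ne_of_gt hθ0) (ne_of_gt hpi)] at h1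
    have hlogθ : Real.log θ = Real.log (Real.pi / D) + Real.log (ρ ξ η) := by
      rw [hθdef]
      exact Real.log_mul (ne_of_gt (div_pos hpi hDpos)) (ne_of_gt hρpos)
    have hlogG : Real.log (a ^ (-br)) = -br * lam := by
      rw [Real.log_rpow ha0, hlam]
    have hlogρ_up : Real.log (ρ ξ η) ≤ Real.log k₂ + (-br * lam) := by
      have h1 := Real.log_le_log hρpos hv2
      rwa [Real.log_mul (ne_of_gt hk₂) (ne_of_gt hGpos), hlogG] at h1
    have hlogρ_low : Real.log k₁ + (-br * lam) ≤ Real.log (ρ ξ η) := by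
      have h1 := Real.log_le_log (by positivity) hv1
      rwa [Real.log_mul (ne_of_gt hk₁) (ne_of_gt hGpos), hlogG] at h1
    have hβbound : |βv - lam * br| ≤ Cβ := by
      rw [hβvdef, abs_le]
      have l1 := le_abs_self (Real.log (Real.pi / D))
      have l2 := neg_abs_le (Real.log (Real.pi / D))
      have l3 := le_abs_self (Real.log k₁)
      have l4 := neg_abs_le (Real.log k₁)
      have l5 := le_abs_self (Real.log k₂)
      have l6 := neg_abs_le (Real.log k₂)
      constructor
      · rw [hCβ]
        linarith [hlogsin_up, hlogρ_up]
      · rw [hCβ]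
        linarith [hlogsin_low, hlogρ_low]
    have hmin1 : |min (min t t') βv - min (min t t') (lam * br)| ≤ Cβ :=
      le_trans (HCQI.min_lip (A := min t t') (x := βv) (y := lam * br)) hβbound
    have hminscale : min (min t t') (lam * br) = lam * min (min t1 t2) br := by
      rw [htlam, htlam', ← HCQI.min_scale hlam0.le t1 t2,
        ← HCQI.min_scale hlam0.le (min t1 t2) br]
    have hts : t + t' = lam * (t1 + t2) := by
      rw [htlam, htlam']
      ring
    have hconetot : |dA - lam * (t1 + t2 - 2 * min (min t1 t2) br)| ≤ 3 + 2*Cβ := by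
      rw [hconevalθ]
      rw [abs_le] at hcest hmin1 ⊢
      constructor <;> linarith [hminscale, hts, hcest.1, hcest.2, hmin1.1, hmin1.2]
    rw [abs_le] at hconetot
    have h2lam : (3 + 2*Cβ)/lam ≤ (5 + 2*Cβ)/lam := by
      have h3 : (5 + 2*Cβ)/lam - (3 + 2*Cβ)/lam = 2/lam := by ring
      have h4 : 0 ≤ 2/lam := div_nonneg (by norm_num) hlam0.le
      linarith
    constructor
    · have h1 : dA / lam ≤ (t1 + t2 - 2 * min (min t1 t2) br) + (3 + 2*Cβ)/lam := by
        rw [div_le_iff₀ hlam0]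
        have h5 : ((t1 + t2 - 2 * min (min t1 t2) br) + (3 + 2*Cβ)/lam) * lam
            = lam * (t1 + t2 - 2 * min (min t1 t2) br) + (3 + 2*Cβ) := by
          field_simp
        rw [h5]
        linarith [hconetot.1]
      linarith [hdivLL, hdX1, h1, h2lam]
    · have h1 : (t1 + t2 - 2 * min (min t1 t2) br) ≤ dA * lam⁻¹ + (3 + 2*Cβ)/lam := by
        have h5 : (t1 + t2 - 2 * min (min t1 t2) br) * lam ≤ dA + (3 + 2*Cβ) := by
          linarith [hconetot.2]
        have h6 := (le_div_iff₀ hlam0).2 h5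
        have h7 : (dA + (3 + 2*Cβ))/lam = dA * lam⁻¹ + (3 + 2*Cβ)/lam := by ring
        linarith
      have h2 : dA * lam⁻¹ ≤ dA * LL := mul_le_mul_of_nonneg_left hLLinv hdA0
      have h8 : dA * LL = LL * dA := mul_comm _ _
      linarith [hdX2, h1, h2, h2lam]
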